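/- With G, G̃ and the lifting x̃ of x as above, let W̃ ⊆ Ṽ be any vertex set, and let A = {v ∈ V : v₁ ∈ W̃, v₂ ∉ W̃}. Then x̃(δ(W̃)) ≥ |A| − 2·x(E[A]), where E[A] is the set of edges of G with both endpoints in A and δ(W̃) is the set of edges of G̃ with exactly one endpoint in W̃. -/

import Mathlib

open scoped Classical
open Finset

noncomputable section

variable {V : Type*}

/-- A matching of `G`: a set of edges of `G` such that no vertex lies in two of them. -/
def IsMatchingSet (G : SimpleGraph V) (M : Set (Sym2 V)) : Prop :=
  M ⊆ G.edgeSet ∧ ∀ e ∈ M, ∀ f ∈ M, e ≠ f → ∀ v : V, ¬(v ∈ e ∧ v ∈ f)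

/-- A perfect matching of `G`: a matching covering every vertex. -/
def IsPerfectMatchingSet (G : SimpleGraph V) (M : Set (Sym2 V)) : Prop :=
  IsMatchingSet G M ∧ ∀ v : V, ∃ e ∈ M, v ∈ e

/-- Characteristic vector of a set of edges, in `ℝ^{Sym2 V}`. -/
def charVec (M : Set (Sym2 V)) : Sym2 V → ℝ := fun e => if e ∈ M then 1 else 0

/-- The matching polytope of `G`. -/
def matchingPolytope (G : SimpleGraph V) : Set (Sym2 V → ℝ) :=
  convexHull ℝ {x | ∃ M, IsMatchingSet G M ∧ x = charVec M}

/-- The perfect matching polytope of `G`. -/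
def perfectMatchingPolytope (G : SimpleGraph V) : Set (Sym2 V → ℝ) :=
  convexHull ℝ {x | ∃ M, IsPerfectMatchingSet G M ∧ x = charVec M}

/-- The graph `G̃` on two disjoint copies of `V`, with the two copies of `G` and an
edge `{v₁, v₂}` joining the two copies of each vertex `v`. -/
def tildeGraph (G : SimpleGraph V) : SimpleGraph (V ⊕ V) where
  Adj a b := match a, b with
    | .inl u, .inl v => G.Adj u v
    | .inr u, .inr v => G.Adj u v
    | .inl u, .inr v => u = v
    | .inr u, .inl v => u = v
  symm := ⟨by
    rintro (u | u) (v | v) h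
    · exact G.adj_symm h
    · exact h.symm
    · exact h.symm
    · exact G.adj_symm h⟩
  loopless := ⟨by rintro (u | u) h <;> exact G.irrefl h⟩

/-- Orthogonal projection of `ℝ^{Ẽ}` onto the `E₁`-coordinates (the first copy of `G`). -/
def projE1 : (Sym2 (V ⊕ V) → ℝ) → (Sym2 V → ℝ) :=
  fun y e => y (e.map Sum.inl)

variable [Fintype V]

/-- `x(δ(v))`: sum of `x` over the edges of `G` incident to `v`. -/
def degSum (G : SimpleGraph V) (x : Sym2 V → ℝ) (v : V) : ℝ :=
  ∑ e ∈ G.incidenceFinset v, x e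

/-- The lifting `x̃` of `x`: it copies `x` on both copies of `G` and puts
`1 - x(δ(v))` on the linking edge `{v₁, v₂}`. -/
def tildeLift (G : SimpleGraph V) (x : Sym2 V → ℝ) : Sym2 (V ⊕ V) → ℝ :=
  Sym2.lift ⟨fun a b =>
    match a, b with
    | .inl u, .inl v => x s(u, v)
    | .inr u, .inr v => x s(u, v)
    | .inl u, .inr v => if u = v then 1 - degSum G x u else 0
    | .inr u, .inl v => if v = u then 1 - degSum G x v else 0,
    by
      rintro (u | u) (v | v)
      · show x s(u, v) = x s(v, u); rw [Sym2.eq_swap]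
      · rfl
      · rfl
      · show x s(u, v) = x s(v, u); rw [Sym2.eq_swap]⟩

/-- The cut `δ(S)`: edges of `H` with exactly one endpoint in `S`. -/
def cutEdges {W : Type*} [Fintype W] (H : SimpleGraph W) (S : Finset W) : Finset (Sym2 W) :=
  H.edgeFinset.filter fun e => (∃ v ∈ e, v ∈ S) ∧ (∃ v ∈ e, v ∉ S)

/-- `E[S]`: edges of `G` with both endpoints in `S`. -/
def insideEdges (G : SimpleGraph V) (S : Finset V) : Finset (Sym2 V) :=
  G.edgeFinset.filter fun e => ∀ v ∈ e, v ∈ S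

end


section Aux

open scoped Classical
open Finset

variable {V : Type*} [Fintype V]

lemma tildeLift_mapInl (G : SimpleGraph V) (x : Sym2 V → ℝ) (e : Sym2 V) :
    tildeLift G x (e.map Sum.inl) = x e := by
  induction e using Sym2.ind with
  | _ u v => simp [Sym2.map_pair_eq, tildeLift]

lemma tildeLift_mapInr (G : SimpleGraph V) (x : Sym2 V → ℝ) (e : Sym2 V) :
    tildeLift G x (e.map Sum.inr) = x e := by
  induction e using Sym2.ind with
  | _ u v => simp [Sym2.map_pair_eq, tildeLift]

lemma tildeLift_link (G : SimpleGraph V) (x : Sym2 V → ℝ) (v : V) :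
    tildeLift G x s(Sum.inl v, Sum.inr v) = 1 - degSum G x v := by
  simp [tildeLift]

lemma card_filter_eq_real (A : Finset V) (b : V) :
    ((A.filter (fun w => w = b)).card : ℝ) = if b ∈ A then 1 else 0 := by
  by_cases hb : b ∈ A
  · have h : A.filter (fun w => w = b) = {b} := by
      ext a
      simp only [Finset.mem_filter, Finset.mem_singleton]
      exact ⟨fun h => h.2, fun h => ⟨h ▸ hb, h⟩⟩
    rw [h]; simp [hb]
  · have h : A.filter (fun w => w = b) = ∅ :=
      Finset.filter_eq_empty_iff.2 (fun a ha h => hb (h ▸ ha))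
    rw [h]; simp [hb]

lemma tildeLift_inl_inl (G : SimpleGraph V) (x : Sym2 V → ℝ) (u v : V) :
    tildeLift G x s(Sum.inl u, Sum.inl v) = x s(u, v) := by
  simp [tildeLift]

lemma tildeLift_inr_inr (G : SimpleGraph V) (x : Sym2 V → ℝ) (u v : V) :
    tildeLift G x s(Sum.inr u, Sum.inr v) = x s(u, v) := by
  simp [tildeLift]

lemma tildeLift_inl_inr (G : SimpleGraph V) (x : Sym2 V → ℝ) (u v : V) :
    tildeLift G x s(Sum.inl u, Sum.inr v) = if u = v then 1 - degSum G x u else 0 := by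
  simp [tildeLift]

lemma map_inl_ne_map_inr (e e' : Sym2 V) :
    e.map Sum.inl ≠ e'.map (Sum.inr : V → V ⊕ V) := by
  induction e using Sym2.ind with
  | _ a b =>
    induction e' using Sym2.ind with
    | _ c d => simp [Sym2.map_pair_eq, Sym2.eq_iff]

/-- The choice map sending a cut edge of `G` to a copy of it that is cut in `G̃`. -/
noncomputable def phiMap (G : SimpleGraph V) (W : Finset (V ⊕ V)) :
    Sym2 V → Sym2 (V ⊕ V) :=
  fun e => if e.map Sum.inl ∈ cutEdges (tildeGraph G) W then e.map Sum.inl else e.map Sum.inr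

lemma phiMap_val (G : SimpleGraph V) (x : Sym2 V → ℝ) (W : Finset (V ⊕ V)) (e : Sym2 V) :
    tildeLift G x (phiMap G W e) = x e := by
  unfold phiMap
  split_ifs
  · exact tildeLift_mapInl G x e
  · exact tildeLift_mapInr G x e

lemma phiMap_injOn (G : SimpleGraph V) (W : Finset (V ⊕ V)) (e e' : Sym2 V)
    (h : phiMap G W e = phiMap G W e') : e = e' := by
  unfold phiMap at h
  split_ifs at h
  · exact Sym2.map.injective Sum.inl_injective h
  · exact absurd h (map_inl_ne_map_inr e e')
  · exact absurd h.symm (map_inl_ne_map_inr e' e)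
  · exact Sym2.map.injective Sum.inr_injective h

lemma mem_cutEdges {W' : Type*} [Fintype W'] (H : SimpleGraph W') (S : Finset W')
    (e : Sym2 W') :
    e ∈ cutEdges H S ↔ e ∈ H.edgeFinset ∧ (∃ v ∈ e, v ∈ S) ∧ (∃ v ∈ e, v ∉ S) := by
  simp [cutEdges]

lemma degSum_eq_sum_ite (G : SimpleGraph V) (x : Sym2 V → ℝ) (v : V) :
    degSum G x v = ∑ e ∈ G.edgeFinset, if v ∈ e then x e else 0 := by
  classical
  rw [degSum, SimpleGraph.incidenceFinset_eq_filter, Finset.sum_filter]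

lemma double_count (G : SimpleGraph V) (x : Sym2 V → ℝ) (A : Finset V) :
    ∑ v ∈ A, degSum G x v
      = 2 * ∑ e ∈ insideEdges G A, x e + ∑ e ∈ cutEdges G A, x e := by
  classical
  have key : ∀ e ∈ G.edgeFinset,
      ∑ v ∈ A, (if v ∈ e then x e else 0)
        = (if (∀ v ∈ e, v ∈ A) then 2 * x e else 0)
          + (if ((∃ v ∈ e, v ∈ A) ∧ ∃ v ∈ e, v ∉ A) then x e else 0) := by
    intro e he
    induction e using Sym2.ind with
    | _ u v =>
      have hne : u ≠ v := by
        rw [SimpleGraph.mem_edgeFinset, SimpleGraph.mem_edgeSet] at he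
        exact he.ne
      have hsum : ∑ w ∈ A, (if w ∈ s(u, v) then x s(u, v) else 0)
          = (if u ∈ A then x s(u,v) else 0) + (if v ∈ A then x s(u,v) else 0) := by
        rw [← Finset.sum_filter]
        have hfil : A.filter (fun w => w ∈ s(u, v))
            = A.filter (fun w => w = u) ∪ A.filter (fun w => w = v) := by
          rw [← Finset.filter_or]
          apply Finset.filter_congr
          intro w _
          simp [Sym2.mem_iff]
        rw [hfil, Finset.sum_union]
        · rw [Finset.sum_const, Finset.sum_const, nsmul_eq_mul, nsmul_eq_mul,
            card_filter_eq_real, card_filter_eq_real]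
          by_cases hu : u ∈ A <;> by_cases hv : v ∈ A <;> simp [hu, hv]
        · rw [Finset.disjoint_left]
          intro a ha hb
          simp only [Finset.mem_filter] at ha hb
          exact hne (ha.2 ▸ hb.2 ▸ rfl)
      rw [hsum]
      by_cases hu : u ∈ A <;> by_cases hv : v ∈ A <;>
        simp [hu, hv, Sym2.mem_iff, hne, Ne.symm hne] <;> ring
  calc ∑ v ∈ A, degSum G x v
      = ∑ e ∈ G.edgeFinset, ∑ v ∈ A, (if v ∈ e then x e else 0) := by
        simp_rw [degSum_eq_sum_ite]; rw [Finset.sum_comm]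
    _ = ∑ e ∈ G.edgeFinset, ((if (∀ v ∈ e, v ∈ A) then 2 * x e else 0)
          + (if ((∃ v ∈ e, v ∈ A) ∧ ∃ v ∈ e, v ∉ A) then x e else 0)) :=
        Finset.sum_congr rfl key
    _ = 2 * ∑ e ∈ insideEdges G A, x e + ∑ e ∈ cutEdges G A, x e := by
        rw [Finset.sum_add_distrib, ← Finset.sum_filter, ← Finset.sum_filter,
          Finset.mul_sum]
        rfl

end Aux

/-- For any vertex subset `W` of `G̃` and `A = {v : v₁ ∈ W, v₂ ∉ W}`, the lifted
point satisfies `x̃(δ(W)) ≥ |A| - 2 x(E[A])`. -/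
theorem tildeLift_cut_lower_bound {V : Type*} [Fintype V] (G : SimpleGraph V)
    (x : Sym2 V → ℝ)
    (hsupp : ∀ e ∉ G.edgeSet, x e = 0)
    (hx0 : ∀ e, 0 ≤ x e)
    (hdeg : ∀ v, degSum G x v ≤ 1)
    (W : Finset (V ⊕ V))
    (A : Finset V) (hA : A = Finset.univ.filter fun v => Sum.inl v ∈ W ∧ Sum.inr v ∉ W) :
    (A.card : ℝ) - 2 * ∑ e ∈ insideEdges G A, x e
      ≤ ∑ e ∈ cutEdges (tildeGraph G) W, tildeLift G x e := by
  classical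
  have hAmem : ∀ v : V, v ∈ A ↔ (Sum.inl v ∈ W ∧ Sum.inr v ∉ W) := by
    intro v; simp [hA]
  -- nonnegativity of the lift on all edges of the big graph
  have hnonneg : ∀ e ∈ cutEdges (tildeGraph G) W, 0 ≤ tildeLift G x e := by
    intro e he
    have heE : e ∈ (tildeGraph G).edgeSet := by
      have := ((mem_cutEdges _ _ _).1 he).1
      simpa [SimpleGraph.mem_edgeFinset] using this
    induction e using Sym2.ind with
    | _ a b =>
      rw [SimpleGraph.mem_edgeSet] at heE
      rcases a with u | u <;> rcases b with v | v
      · rw [tildeLift_inl_inl]; exact hx0 _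
      · have huv : u = v := heE
        subst huv
        rw [tildeLift_inl_inr, if_pos rfl]
        linarith [hdeg u]
      · have huv : u = v := heE
        subst huv
        rw [Sym2.eq_swap, tildeLift_inl_inr, if_pos rfl]
        linarith [hdeg u]
      · rw [tildeLift_inr_inr]; exact hx0 _
  -- the linking edges of vertices of A are in the cut
  have hlinkcut : ∀ v ∈ A, s(Sum.inl v, Sum.inr v) ∈ cutEdges (tildeGraph G) W := by
    intro v hv
    refine (mem_cutEdges _ _ _).2 ⟨?_, ⟨Sum.inl v, by simp, ((hAmem v).1 hv).1⟩,
      ⟨Sum.inr v, by simp, ((hAmem v).1 hv).2⟩⟩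
    rw [SimpleGraph.mem_edgeFinset, SimpleGraph.mem_edgeSet]
    show (tildeGraph G).Adj (Sum.inl v) (Sum.inr v)
    exact rfl
  -- the chosen copy of each cut edge of G is in the cut of the big graph
  have hkey : ∀ u v, G.Adj u v → u ∈ A → v ∉ A →
      phiMap G W s(u, v) ∈ cutEdges (tildeGraph G) W := by
    intro u v hadj hu hv
    by_cases h : (s(u, v)).map Sum.inl ∈ cutEdges (tildeGraph G) W
    · rw [show phiMap G W s(u, v) = (s(u, v)).map Sum.inl from if_pos h]
      exact h
    · have hlv : Sum.inl v ∈ W := by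
        by_contra hlv
        apply h
        rw [Sym2.map_pair_eq]
        refine (mem_cutEdges _ _ _).2 ⟨?_, ⟨Sum.inl u, by simp, ((hAmem u).1 hu).1⟩,
          ⟨Sum.inl v, by simp, hlv⟩⟩
        rw [SimpleGraph.mem_edgeFinset, SimpleGraph.mem_edgeSet]
        exact hadj
      have hrv : Sum.inr v ∈ W := by
        by_contra hrv
        exact hv ((hAmem v).2 ⟨hlv, hrv⟩)
      have hphi : phiMap G W s(u, v) = s(Sum.inr u, Sum.inr v) := by
        rw [show phiMap G W s(u, v) = (s(u, v)).map Sum.inr from if_neg h, Sym2.map_pair_eq]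
      rw [hphi]
      refine (mem_cutEdges _ _ _).2 ⟨?_, ⟨Sum.inr v, by simp, hrv⟩,
        ⟨Sum.inr u, by simp, ((hAmem u).1 hu).2⟩⟩
      rw [SimpleGraph.mem_edgeFinset, SimpleGraph.mem_edgeSet]
      exact hadj
  have hphicut : ∀ e ∈ cutEdges G A, phiMap G W e ∈ cutEdges (tildeGraph G) W := by
    intro e he
    induction e using Sym2.ind with
    | _ u v =>
      obtain ⟨heE, h1, h2⟩ := (mem_cutEdges _ _ _).1 he
      rw [SimpleGraph.mem_edgeFinset, SimpleGraph.mem_edgeSet] at heE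
      simp only [Sym2.mem_iff, exists_eq_or_imp, exists_eq_left] at h1 h2
      rcases h1 with hu | hv
      · rcases h2 with hu' | hv'
        · exact absurd hu hu'
        · exact hkey u v heE hu hv'
      · rcases h2 with hu' | hv'
        · rw [Sym2.eq_swap]
          exact hkey v u heE.symm hv hu'
        · exact absurd hv hv'
  set linkE : Finset (Sym2 (V ⊕ V)) := A.image (fun v => s(Sum.inl v, Sum.inr v)) with hlinkE
  set C : Finset (Sym2 (V ⊕ V)) := (cutEdges G A).image (phiMap G W) with hC
  have hdisj : Disjoint linkE C := by
    rw [Finset.disjoint_left]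
    rintro a ha hb
    rw [hlinkE, Finset.mem_image] at ha
    rw [hC, Finset.mem_image] at hb
    obtain ⟨v, hv, rfl⟩ := ha
    obtain ⟨e, he, heq⟩ := hb
    induction e using Sym2.ind with
    | _ a b =>
      by_cases h1 : (s(a, b)).map Sum.inl ∈ cutEdges (tildeGraph G) W
      · rw [show phiMap G W s(a, b) = (s(a, b)).map Sum.inl from if_pos h1,
          Sym2.map_pair_eq] at heq
        simp [Sym2.eq_iff] at heq
      · rw [show phiMap G W s(a, b) = (s(a, b)).map Sum.inr from if_neg h1,
          Sym2.map_pair_eq] at heq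
        simp [Sym2.eq_iff] at heq
  have hsub : linkE ∪ C ⊆ cutEdges (tildeGraph G) W :=
    Finset.union_subset (Finset.image_subset_iff.2 hlinkcut)
      (Finset.image_subset_iff.2 hphicut)
  have hsumL : ∑ e ∈ linkE, tildeLift G x e = ∑ v ∈ A, (1 - degSum G x v) := by
    rw [hlinkE, Finset.sum_image (fun a _ b _ h => by simpa [Sym2.eq_iff] using h)]
    exact Finset.sum_congr rfl fun v _ => tildeLift_link G x v
  have hsumC : ∑ e ∈ C, tildeLift G x e = ∑ e ∈ cutEdges G A, x e := by
    rw [hC, Finset.sum_image (fun a _ b _ h => phiMap_injOn G W a b h)]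
    exact Finset.sum_congr rfl fun e _ => phiMap_val G x W e
  calc (A.card : ℝ) - 2 * ∑ e ∈ insideEdges G A, x e
      = ∑ v ∈ A, (1 - degSum G x v) + ∑ e ∈ cutEdges G A, x e := by
        rw [Finset.sum_sub_distrib, Finset.sum_const, double_count]
        push_cast
        ring
    _ = ∑ e ∈ linkE ∪ C, tildeLift G x e := by
        rw [Finset.sum_union hdisj, hsumL, hsumC]
    _ ≤ ∑ e ∈ cutEdges (tildeGraph G) W, tildeLift G x e :=
        Finset.sum_le_sum_of_subset_of_nonneg hsub (fun e he _ => hnonneg e he)
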